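/- PDP implies causality. Let (X, ℓ) be a Lorentzian pre-length space satisfying the point distinction property. Then (X, ℓ) is causal: for all x, y ∈ X, if ℓ(x,y) ≥ 0 and ℓ(y,x) ≥ 0 then x = y; in particular the causal relation ≤ is a partial order. -/

import Mathlib

open Filter Topology Set

set_option linter.unusedVariables false

universe u v w

noncomputable section

/-- The time separation function `τ = max(0, ℓ)`. -/
def lorTau {X : Type u} (ℓ : X → X → EReal) (x y : X) : EReal := max 0 (ℓ x y)

/-- The chronological relation `x ≪ y`. -/
def chron {X : Type u} (ℓ : X → X → EReal) (x y : X) : Prop := 0 < ℓ x y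

/-- The causal relation `x ≤ y`. -/
def causal {X : Type u} (ℓ : X → X → EReal) (x y : X) : Prop := 0 ≤ ℓ x y

/-- The causal diamond `J(p,q)`. -/
def diamondJ {X : Type u} (ℓ : X → X → EReal) (p q : X) : Set X :=
  {z | causal ℓ p z ∧ causal ℓ z q}

/-- The chronological diamond `I(p,q)`. -/
def diamondI {X : Type u} (ℓ : X → X → EReal) (p q : X) : Set X :=
  {z | chron ℓ p z ∧ chron ℓ z q}

/-- A Lorentzian pre-length space structure on a topological space `(X, tX)`:
`ℓ` takes values in `{−∞} ∪ [0,∞]`, satisfies the reverse triangle inequality (with the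
convention `−∞ + ∞ = ∞ + (−∞) = −∞`, which is definitional for `EReal`), `ℓ(x,x) ≥ 0`,
and the topology is finer than the chronological one. -/
structure IsLPLS {X : Type u} (tX : TopologicalSpace X) (ℓ : X → X → EReal) : Prop where
  bot_or_nonneg : ∀ x y, ℓ x y = ⊥ ∨ 0 ≤ ℓ x y
  revTriangle : ∀ x y z, ℓ x y + ℓ y z ≤ ℓ x z
  refl_nonneg : ∀ x, 0 ≤ ℓ x x
  open_Iplus : ∀ x, @IsOpen X tX {y | chron ℓ x y}
  open_Iminus : ∀ x, @IsOpen X tX {y | chron ℓ y x}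

/-- Forward completeness: every monotone increasing and bounded sequence converges. -/
def ForwardComplete {X : Type u} (tX : TopologicalSpace X) (ℓ : X → X → EReal) : Prop :=
  ∀ (x : ℕ → X) (xhat : X), (∀ k, causal ℓ (x k) (x (k + 1))) → (∀ k, causal ℓ (x k) xhat) →
    ∃ y, Tendsto x atTop (@nhds X tX y)

/-- `(Y, tY, ρ)` together with the map `ι : X → Y` is a forward completion of
`(X, tX, ℓ)`: it is a forward complete Lorentzian pre-length space, all causal futures
and pasts are closed, `ι` is `ℓ`-preserving and `X` is forward dense in `Y`. -/
structure IsForwardCompletion {X : Type u} (tX : TopologicalSpace X) (ℓ : X → X → EReal)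
    {Y : Type v} (tY : TopologicalSpace Y) (ρ : Y → Y → EReal) (ι : X → Y) : Prop where
  lpls : IsLPLS tY ρ
  fwdComplete : ForwardComplete tY ρ
  closed_Jplus : ∀ y : Y, @IsClosed Y tY {z | causal ρ y z}
  closed_Jminus : ∀ y : Y, @IsClosed Y tY {z | causal ρ z y}
  isometric : ∀ x x' : X, ρ (ι x) (ι x') = ℓ x x'
  fwdDense : ∀ y : Y, ∃ u : ℕ → X,
    (∀ k, causal ρ (ι (u k)) (ι (u (k + 1)))) ∧ (∀ k, causal ρ (ι (u k)) y) ∧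
    Tendsto (fun k => ι (u k)) atTop (@nhds Y tY y)

/-!
Causally related points are indistinguishable by `ℓ`: by the reverse triangle inequality,
`0 ≤ ℓ(x,y)` gives `ℓ(y,z) ≤ ℓ(x,z)` and `ℓ(z,x) ≤ ℓ(z,y)` for every `z`, so `x ≤ y ≤ x` forces
`ℓ(x,·) = ℓ(y,·)` and `ℓ(·,x) = ℓ(·,y)`, and the point distinction property then gives `x = y`.
-/

section ReverseTriangle

variable {X : Type u} {ℓ : X → X → EReal} (htri : ∀ x y z, ℓ x y + ℓ y z ≤ ℓ x z)
include htri

theorem le_left_of_causal {x y : X} (hxy : causal ℓ x y) (z : X) : ℓ y z ≤ ℓ x z :=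
  calc ℓ y z = 0 + ℓ y z := (zero_add _).symm
    _ ≤ ℓ x y + ℓ y z := add_le_add_left hxy _
    _ ≤ ℓ x z := htri x y z

theorem le_right_of_causal {x y : X} (hxy : causal ℓ x y) (z : X) : ℓ z x ≤ ℓ z y :=
  calc ℓ z x = ℓ z x + 0 := (add_zero _).symm
    _ ≤ ℓ z x + ℓ x y := add_le_add_right hxy _
    _ ≤ ℓ z y := htri z x y

theorem causal_trans {x y z : X} (hxy : causal ℓ x y) (hyz : causal ℓ y z) : causal ℓ x z :=
  hyz.trans (le_left_of_causal htri hxy z)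

theorem eq_of_causal_of_causal
    (hpdp : ∀ x y : X, x ≠ y → ∃ z, ℓ x z ≠ ℓ y z ∨ ℓ z x ≠ ℓ z y)
    {x y : X} (hxy : causal ℓ x y) (hyx : causal ℓ y x) : x = y := by
  by_contra hne
  obtain ⟨z, hz | hz⟩ := hpdp x y hne
  · exact hz (le_antisymm (le_left_of_causal htri hyx z) (le_left_of_causal htri hxy z))
  · exact hz (le_antisymm (le_right_of_causal htri hxy z) (le_right_of_causal htri hyx z))

end ReverseTriangle

/-- **PDP implies causality** (Lemma 4.3).
A Lorentzian pre-length space satisfying the point distinction property is causal: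
if `ℓ(x,y) ≥ 0` and `ℓ(y,x) ≥ 0` then `x = y`; in particular the causal relation is a
partial order. -/
theorem pdp_implies_causal {X : Type u} (tX : TopologicalSpace X) (ℓ : X → X → EReal)
    (h : IsLPLS tX ℓ)
    (hpdp : ∀ x y : X, x ≠ y → ∃ z, ℓ x z ≠ ℓ y z ∨ ℓ z x ≠ ℓ z y) :
    (∀ x y : X, causal ℓ x y → causal ℓ y x → x = y) ∧
    IsPartialOrder X (causal ℓ) := by
  have antisymm : ∀ x y : X, causal ℓ x y → causal ℓ y x → x = y :=
    fun _ _ => eq_of_causal_of_causal h.revTriangle hpdp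
  exact ⟨antisymm,
    { refl := h.refl_nonneg
      trans := fun _ _ _ => causal_trans h.revTriangle
      antisymm := antisymm }⟩

end
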